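/- Let N ≥ 2 and let S = ⊗_{j=1}^N P_j be the Pauli word with P_j = X for odd j and P_j = Y for even j. For a function f : Fin N → Fin 4, let W(f) = ⊗_{j=1}^N σ_{f(j)} be the associated Pauli word, where σ_0 = I (2×2 identity), σ_1 = X, σ_2 = Y, σ_3 = Z. Then the number of functions f : Fin N → Fin 4 such that W(f)ᵀ·S + S·W(f) = 0 equals 2^{2N−1} − 2^{N−1} if N mod 4 ∈ {0, 1}, and 2^{2N−1} + 2^{N−1} if N mod 4 ∈ {2, 3}. -/
import Mathlib


open Matrix Complex Finset

/-- The Pauli X matrix. -/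
noncomputable def PauliX : Matrix (Fin 2) (Fin 2) ℂ := !![0, 1; 1, 0]
/-- The Pauli Y matrix. -/
noncomputable def PauliY : Matrix (Fin 2) (Fin 2) ℂ := !![0, -Complex.I; Complex.I, 0]
/-- The Pauli Z matrix. -/
noncomputable def PauliZ : Matrix (Fin 2) (Fin 2) ℂ := !![1, 0; 0, -1]

/-- Tensor product of `N` single-qubit matrices: the entry at `(x, y)` is `∏ j, (P j) (x j) (y j)`. -/
noncomputable def kronN {N : ℕ} (P : Fin N → Matrix (Fin 2) (Fin 2) ℂ) :
    Matrix (Fin N → Fin 2) (Fin N → Fin 2) ℂ :=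
  Matrix.of fun x y => ∏ j, P j (x j) (y j)

/-- The single-qubit operator `R` acting on site `k`, identity elsewhere. -/
noncomputable def localOp {N : ℕ} (k : Fin N) (R : Matrix (Fin 2) (Fin 2) ℂ) :
    Matrix (Fin N → Fin 2) (Fin N → Fin 2) ℂ :=
  kronN (fun m => if m = k then R else 1)

/-- The two-site operator with `R` at site `j`, `R'` at site `k`, identity elsewhere. -/
noncomputable def twoOp {N : ℕ} (j k : Fin N) (R R' : Matrix (Fin 2) (Fin 2) ℂ) :
    Matrix (Fin N → Fin 2) (Fin N → Fin 2) ℂ :=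
  kronN (fun m => if m = j then R else if m = k then R' else 1)

/-- Left site of the `j`-th bond of a chain of length `N`. -/
def siteL {N : ℕ} (j : Fin (N - 1)) : Fin N := ⟨j.val, by have := j.isLt; omega⟩
/-- Right site of the `j`-th bond of a chain of length `N`. -/
def siteR {N : ℕ} (j : Fin (N - 1)) : Fin N := ⟨j.val + 1, by have := j.isLt; omega⟩

/-- The XYZ chain Hamiltonian of length `N` with couplings `a b c : Fin (N-1) → ℝ`:
`H₀ = Σ_j (a_j X_j X_{j+1} + b_j Y_j Y_{j+1} + c_j Z_j Z_{j+1})`. -/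
noncomputable def xyzChain (N : ℕ) (a b c : Fin (N - 1) → ℝ) :
    Matrix (Fin N → Fin 2) (Fin N → Fin 2) ℂ :=
  ∑ j : Fin (N - 1),
    ((a j : ℂ) • twoOp (siteL j) (siteR j) PauliX PauliX +
     (b j : ℂ) • twoOp (siteL j) (siteR j) PauliY PauliY +
     (c j : ℂ) • twoOp (siteL j) (siteR j) PauliZ PauliZ)

/-- The XX chain Hamiltonian of length `N` with couplings `γ : Fin (N-1) → ℝ`:
`H₀ = Σ_j γ_j (X_j X_{j+1} + Y_j Y_{j+1})`. -/
noncomputable def xxChain (N : ℕ) (γ : Fin (N - 1) → ℝ) :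
    Matrix (Fin N → Fin 2) (Fin N → Fin 2) ℂ :=
  ∑ j : Fin (N - 1),
    (γ j : ℂ) • (twoOp (siteL j) (siteR j) PauliX PauliX +
                 twoOp (siteL j) (siteR j) PauliY PauliY)

/-- The Pauli word associated to `f : Fin N → Fin 4`, with `σ_0 = I`, `σ_1 = X`, `σ_2 = Y`,
`σ_3 = Z` at each site. -/
noncomputable def pauliWord {N : ℕ} (f : Fin N → Fin 4) :
    Matrix (Fin N → Fin 2) (Fin N → Fin 2) ℂ :=
  kronN (fun j => ![1, PauliX, PauliY, PauliZ] (f j))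

noncomputable def sigma (k : Fin 4) : Matrix (Fin 2) (Fin 2) ℂ := ![1, PauliX, PauliY, PauliZ] k

noncomputable def eps (b : Prop) [Decidable b] (k : Fin 4) : ℂ :=
  if (b ∧ k = 3) ∨ (¬b ∧ k ≠ 0) then -1 else 1

lemma eps_mul_self (b : Prop) [Decidable b] (k : Fin 4) : eps b k * eps b k = 1 := by
  unfold eps; split <;> norm_num

lemma eps_sum (b : Prop) [Decidable b] :
    ∑ k : Fin 4, eps b k = if b then 2 else -2 := by
  by_cases hb : b <;> simp [Fin.sum_univ_four, eps, hb] <;> norm_num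

lemma prodRange (n : ℕ) :
    ∏ j ∈ Finset.range n, (if j % 2 = 0 then (2:ℂ) else -2) = (-1)^(n/2) * 2^n := by
  induction n with
  | zero => simp
  | succ m ih =>
    rw [Finset.prod_range_succ, ih]
    rcases Nat.even_or_odd m with ⟨t, ht⟩ | ⟨t, ht⟩ <;> subst ht
    · have h1 : (t+t) % 2 = 0 := by omega
      have h2 : (t+t)/2 = t := by omega
      have h3 : (t+t+1)/2 = t := by omega
      rw [if_pos h1, h2, h3]; ring
    · have h1 : ¬((2*t+1) % 2 = 0) := by omega
      have h2 : (2*t+1)/2 = t := by omega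
      have h3 : (2*t+1+1)/2 = t+1 := by omega
      rw [if_neg h1, h2, h3, pow_succ, pow_succ]; ring

lemma sigma_mul_self (k : Fin 4) : sigma k * sigma k = 1 := by
  fin_cases k <;>
    · ext i j
      fin_cases i <;> fin_cases j <;>
        simp [sigma, PauliX, PauliY, PauliZ, Matrix.mul_apply, Fin.sum_univ_two,
          Matrix.one_apply]

lemma key (b : Prop) [Decidable b] (k : Fin 4) :
    (sigma k)ᵀ * (if b then PauliX else PauliY) =
      eps b k • ((if b then PauliX else PauliY) * sigma k) := by
  by_cases hb : b <;>
    · simp only [hb, if_true, if_false, eps, if_neg, if_pos]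
      fin_cases k <;>
        · norm_num
          ext i j
          fin_cases i <;> fin_cases j <;>
            simp [sigma, PauliX, PauliY, PauliZ, Matrix.mul_apply, Fin.sum_univ_two,
              Matrix.transpose_apply, Matrix.one_apply, Matrix.smul_apply, Matrix.vecHead,
              Matrix.vecTail] <;> ring

lemma kronN_mul {N : ℕ} (A B : Fin N → Matrix (Fin 2) (Fin 2) ℂ) :
    kronN A * kronN B = kronN (fun j => A j * B j) := by
  ext x y
  simp only [kronN, Matrix.of_apply, Matrix.mul_apply, ← Finset.prod_mul_distrib]
  rw [Finset.prod_univ_sum]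
  rw [Fintype.piFinset_univ]

lemma kronN_transpose {N : ℕ} (A : Fin N → Matrix (Fin 2) (Fin 2) ℂ) :
    (kronN A)ᵀ = kronN (fun j => (A j)ᵀ) := by
  ext x y; simp [kronN]

lemma kronN_smul {N : ℕ} (c : Fin N → ℂ) (A : Fin N → Matrix (Fin 2) (Fin 2) ℂ) :
    kronN (fun j => c j • A j) = (∏ j, c j) • kronN A := by
  ext x y
  simp [kronN, Finset.prod_mul_distrib]

lemma kronN_one {N : ℕ} : kronN (fun _ : Fin N => (1 : Matrix (Fin 2) (Fin 2) ℂ)) = 1 := by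
  ext x y
  by_cases h : x = y
  · subst h; simp [kronN, Matrix.one_apply]
  · obtain ⟨j, hj⟩ := Function.ne_iff.mp h
    rw [kronN]
    simp only [Matrix.of_apply]
    rw [Matrix.one_apply_ne h]
    exact Finset.prod_eq_zero (Finset.mem_univ j) (Matrix.one_apply_ne hj)


/-- The number of Pauli words `W(f)` satisfying `W(f)ᵀ S + S W(f) = 0` for the internal
symmetry `S = X_1 Y_2 X_3 Y_4 ⋯` is `2^{2N−1} − 2^{N−1}` when `N mod 4 ∈ {0, 1}`, and
`2^{2N−1} + 2^{N−1}` when `N mod 4 ∈ {2, 3}`. -/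
theorem count_symmetry_preserving_pauli_words (N : ℕ) (hN : 2 ≤ N) :
    let S : Matrix (Fin N → Fin 2) (Fin N → Fin 2) ℂ :=
      kronN (fun j => if j.val % 2 = 0 then PauliX else PauliY)
    (N % 4 = 0 ∨ N % 4 = 1 →
      Nat.card {f : Fin N → Fin 4 // (pauliWord f)ᵀ * S + S * pauliWord f = 0} =
        2 ^ (2 * N - 1) - 2 ^ (N - 1)) ∧
    (N % 4 = 2 ∨ N % 4 = 3 →
      Nat.card {f : Fin N → Fin 4 // (pauliWord f)ᵀ * S + S * pauliWord f = 0} =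
        2 ^ (2 * N - 1) + 2 ^ (N - 1)) := by
  classical
  intro S
  set Pf : Fin N → Matrix (Fin 2) (Fin 2) ℂ :=
    fun j => if j.val % 2 = 0 then PauliX else PauliY with hPf
  have hS : S = kronN Pf := rfl
  have hW : ∀ f : Fin N → Fin 4, pauliWord f = kronN (fun j => sigma (f j)) := fun f => rfl
  set E : (Fin N → Fin 4) → ℂ := fun f => ∏ j, eps ((j : Fin N).val % 2 = 0) (f j) with hEdef
  have hPP : ∀ j : Fin N, Pf j * Pf j = 1 := by
    intro j
    by_cases h : (j : Fin N).val % 2 = 0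
    · simp only [hPf, h, if_true]
      simpa [sigma] using sigma_mul_self 1
    · simp only [hPf, h, if_false]
      simpa [sigma] using sigma_mul_self 2
  have hSW : ∀ f, S * pauliWord f = kronN (fun j => Pf j * sigma (f j)) := by
    intro f; rw [hS, hW, kronN_mul]
  have hE : ∀ f, (pauliWord f)ᵀ * S + S * pauliWord f = (E f + 1) • (S * pauliWord f) := by
    intro f
    have h1 : (pauliWord f)ᵀ * S = kronN (fun j => (sigma (f j))ᵀ * Pf j) := by
      rw [hW, hS, kronN_transpose, kronN_mul]
    have h2 : (fun j => (sigma (f j))ᵀ * Pf j)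
        = fun j => eps ((j : Fin N).val % 2 = 0) (f j) • (Pf j * sigma (f j)) := by
      funext j; exact key ((j : Fin N).val % 2 = 0) (f j)
    rw [h1, h2, kronN_smul, hSW, add_smul, one_smul]
  have hSWne : ∀ f, S * pauliWord f ≠ 0 := by
    intro f h0
    have h3' : pauliWord f * S = kronN (fun j => sigma (f j) * Pf j) := by
      rw [hS, hW, kronN_mul]
    have h1 : (S * pauliWord f) * (pauliWord f * S) = 1 := by
      rw [hSW, h3', kronN_mul]
      rw [show (fun j => Pf j * sigma (f j) * (sigma (f j) * Pf j)) =
          fun _ : Fin N => (1 : Matrix (Fin 2) (Fin 2) ℂ) from funext fun j => by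
        rw [mul_assoc, ← mul_assoc (sigma (f j)), sigma_mul_self, one_mul, hPP]]
      exact kronN_one
    rw [h0, zero_mul] at h1
    exact one_ne_zero h1.symm
  have hpm : ∀ f, E f = 1 ∨ E f = -1 := by
    intro f
    have h : E f * E f = 1 := by
      rw [hEdef]
      simp only [← Finset.prod_mul_distrib]
      rw [Finset.prod_congr rfl fun j _ => eps_mul_self ((j : Fin N).val % 2 = 0) (f j)]
      simp
    exact mul_self_eq_one_iff.mp h
  have hcond : ∀ f, ((pauliWord f)ᵀ * S + S * pauliWord f = 0) ↔ E f = -1 := by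
    intro f
    rw [hE]
    constructor
    · intro h
      rcases smul_eq_zero.mp h with h | h
      · exact eq_neg_of_add_eq_zero_left h
      · exact absurd h (hSWne f)
    · intro h; rw [h]; simp
  have hcard : Nat.card {f : Fin N → Fin 4 // (pauliWord f)ᵀ * S + S * pauliWord f = 0}
      = (univ.filter (fun f => E f = -1)).card := by
    rw [Nat.card_congr (Equiv.subtypeEquivRight hcond), Nat.card_eq_fintype_card,
      Fintype.card_subtype]
  set c := (univ.filter (fun f : Fin N → Fin 4 => E f = -1)).card with hc
  set d := (univ.filter (fun f : Fin N → Fin 4 => ¬ E f = -1)).card with hd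
  have hcd : c + d = 4 ^ N := by
    rw [hc, hd, Finset.card_filter_add_card_filter_not]
    simp [Finset.card_univ]
  have hsum : ∑ f : Fin N → Fin 4, E f = (-1)^(N/2) * 2^N := by
    have h1 : ∑ f : Fin N → Fin 4, E f
        = ∏ j : Fin N, ∑ k : Fin 4, eps ((j : Fin N).val % 2 = 0) k := by
      rw [Finset.prod_univ_sum, Fintype.piFinset_univ]
    rw [h1]
    rw [Finset.prod_congr rfl fun j _ => eps_sum ((j : Fin N).val % 2 = 0)]
    rw [Fin.prod_univ_eq_prod_range (fun m => if m % 2 = 0 then (2:ℂ) else -2) N]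
    exact prodRange N
  have hsplit : ∑ f : Fin N → Fin 4, E f = -(c:ℂ) + d := by
    rw [← Finset.sum_filter_add_sum_filter_not univ (fun f => E f = -1)]
    have hA : ∑ f ∈ univ.filter (fun f : Fin N → Fin 4 => E f = -1), E f = -(c:ℂ) := by
      rw [Finset.sum_congr rfl (fun f hf => (Finset.mem_filter.mp hf).2), Finset.sum_const,
        ← hc]
      simp [nsmul_eq_mul]
    have hB : ∑ f ∈ univ.filter (fun f : Fin N → Fin 4 => ¬ E f = -1), E f = (d:ℂ) := by
      rw [Finset.sum_congr rfl (fun f hf => (hpm f).resolve_right (Finset.mem_filter.mp hf).2),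
        Finset.sum_const, ← hd]
      simp
    rw [hA, hB]
  have hkey : -(c:ℂ) + d = (-1)^(N/2) * 2^N := by rw [← hsplit, hsum]
  have h4 : (4:ℕ)^N = 2^(2*N) := by rw [show (4:ℕ) = 2^2 by norm_num, ← pow_mul]
  have e1 : (2:ℕ)^(2*N) = 2*2^(2*N-1) := by
    rw [← pow_succ']; congr 1; omega
  have e2 : (2:ℕ)^N = 2*2^(N-1) := by
    rw [← pow_succ']; congr 1; omega
  constructor
  · intro hN4
    have heven : Even (N/2) := by rw [Nat.even_iff]; omega
    rw [heven.neg_one_pow, one_mul] at hkey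
    have hdn : (d:ℂ) = ((c + 2^N : ℕ) : ℂ) := by push_cast; linear_combination hkey
    have hd2 : d = c + 2^N := Nat.cast_injective hdn
    rw [hcard]
    omega
  · intro hN4
    have hodd : Odd (N/2) := by rw [Nat.odd_iff]; omega
    rw [hodd.neg_one_pow] at hkey
    have hdn : (c:ℂ) = ((d + 2^N : ℕ) : ℂ) := by push_cast; linear_combination -hkey
    have hd2 : c = d + 2^N := Nat.cast_injective hdn
    rw [hcard]
    omega
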